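/- arXiv:1401.1143 — 5 statements merged into one kernel-verified Lean document; each statement's English description precedes it below -/
import Mathlib

section
/- Let E be a Hilbert C*-module over a C*-algebra A and let M ⊆ E be a closed subspace invariant under all 'rank one' operators θ_{η,ξ}(x) = η⟨ξ,x⟩. Define J(M) as the closed linear span of {⟨η, m⟩ : η ∈ E, m ∈ M}. Then J(M) is a closed left ideal of the C*-algebra closure of ⟨E,E⟩, and M = E(J(M)) (the closed span of {ξa : ξ ∈ E, a ∈ J(M)}). -/
open scoped InnerProductSpace RightActions
open Filter Topology

/-- The December-2024 Mathlib `CStarModule`: a right `A`-module (via `Aᵐᵒᵖ`) with an `A`-valued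
inner product, linear in the second argument, satisfying `⟪x, y <• a⟫ = ⟪x, y⟫ * a`. -/
class RightCStarModule (A E : Type*) [NonUnitalSemiring A] [StarRing A] [Module ℂ A]
    [AddCommGroup E] [Module ℂ E] [PartialOrder A] [SMul Aᵐᵒᵖ E] [Norm A] [Norm E]
    extends Inner A E where
  inner_add_right {x} {y} {z} : inner x (y + z) = inner x y + inner x z
  inner_self_nonneg {x} : 0 ≤ inner x x
  inner_self {x} : inner x x = 0 ↔ x = 0
  inner_op_smul_right {a : A} {x y : E} : inner x (y <• a) = inner x y * a
  inner_smul_right_complex {z : ℂ} {x} {y} : inner x (z • y) = z • inner x y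
  star_inner x y : star (inner x y) = inner y x
  norm_eq_sqrt_norm_inner_self x : ‖x‖ = √‖inner x x‖

section Defs

variable (A : Type*) (E : Type*) [NonUnitalCStarAlgebra A] [PartialOrder A] [StarOrderedRing A]
  [NormedAddCommGroup E] [NormedSpace ℂ E] [SMul Aᵐᵒᵖ E] [RightCStarModule A E]

/-- An operator on a Hilbert C*-module is *adjointable* if it admits an adjoint with respect to
the `A`-valued inner product. -/
def Adjointable (T : E →L[ℂ] E) : Prop :=
  ∃ S : E →L[ℂ] E, ∀ x y : E, ⟪T x, y⟫_A = ⟪x, S y⟫_A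

/-- `EJ A E J` is the closed linear span `E(J)` of `{ξ • a : ξ ∈ E, a ∈ J}`. -/
noncomputable def EJ (J : Set A) : Submodule ℂ E :=
  (Submodule.span ℂ {y : E | ∃ ξ : E, ∃ a ∈ J, y = ξ <• a}).topologicalClosure

/-- `JM A E M` is the closed linear span `J(M)` of `{⟪η, m⟫ : η ∈ E, m ∈ M}`. -/
noncomputable def JM (M : Set E) : Submodule ℂ A :=
  (Submodule.span ℂ {a : A | ∃ η : E, ∃ m ∈ M, a = ⟪η, m⟫_A}).topologicalClosure

/-- `BS A E` is the C*-algebra `B`, the closure of the linear span of all inner products. -/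
noncomputable def BS : Set A :=
  closure (Submodule.span ℂ {a : A | ∃ η ξ : E, a = ⟪η, ξ⟫_A} : Set A)

/-- `KE A E` is `K(E)`, the closed (non-unital) algebra generated by the rank-one operators
`θ_{η,ξ} : x ↦ η • ⟪ξ, x⟫`. -/
noncomputable def KE : NonUnitalSubalgebra ℂ (E →L[ℂ] E) :=
  (NonUnitalAlgebra.adjoin ℂ
    {T : E →L[ℂ] E | ∃ η ξ : E, ∀ x : E, T x = η <• ⟪ξ, x⟫_A}).topologicalClosure

end Defs

/-! `J(M)` is a left ideal of `B` because `⟪α, β⟫ * ⟪η, m⟫ = ⟪α, β <• ⟪η, m⟫⟫` and `M` absorbs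
`β <• ⟪η, m⟫`; the same invariance gives `ξ <• J(M) ⊆ M`, hence `E(J(M)) ⊆ M`. Conversely, for
`m ∈ M` the positive element `x = ⟪m, m⟫` lies in `J(M)` and in `B`, so the closed subspace `J(M)`
is stable under left multiplication by `x` and contains every `cfcₙ f x`, in particular
`a_c = x (c + x)⁻¹`. Then `‖m <• a_c - m‖² = ‖(1 - a_c) x (1 - a_c)‖ ≤ sup_{t ≥ 0} t c² / (c + t)²`,
which is at most `c`, so `m <• a_c → m` as `c → 0⁺` and `m ∈ E(J(M))`. -/

section CStarAlgebra

variable {A : Type*} [NonUnitalCStarAlgebra A]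

open NonUnitalStarAlgebra in
theorem elemental_subset_of_mul_mem {J : Submodule ℂ A} (hJ : IsClosed (J : Set A)) {x : A}
    (hx : IsSelfAdjoint x) (hxJ : x ∈ J) (hxJJ : ∀ j ∈ J, x * j ∈ J) :
    (elemental ℝ x : Set A) ⊆ J := by
  refine closure_minimal (fun a ha => ?_) hJ
  replace ha : a ∈ NonUnitalAlgebra.adjoin ℝ {x} := by
    rwa [SetLike.mem_coe, ← NonUnitalStarSubalgebra.mem_toNonUnitalSubalgebra,
      adjoin_toNonUnitalSubalgebra, Set.star_singleton, hx.star_eq, Set.union_self] at ha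
  suffices a ∈ J ∧ ∀ j ∈ J, a * j ∈ J from this.1
  induction ha using NonUnitalAlgebra.adjoin_induction with
  | mem a ha => rw [Set.mem_singleton_iff.mp ha]; exact ⟨hxJ, hxJJ⟩
  | zero => simp
  | add a b _ _ ha hb =>
    exact ⟨add_mem ha.1 hb.1, fun j hj => add_mul a b j ▸ add_mem (ha.2 j hj) (hb.2 j hj)⟩
  | mul a b _ _ ha hb =>
    exact ⟨ha.2 b hb.1, fun j hj => (mul_assoc a b j).symm ▸ ha.2 _ (hb.2 j hj)⟩
  | smul r a _ ha =>
    exact ⟨J.smul_of_tower_mem r ha.1,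
      fun j hj => (smul_mul_assoc r a j).symm ▸ J.smul_of_tower_mem r (ha.2 j hj)⟩

theorem cfcₙ_mem_of_mul_mem {J : Submodule ℂ A} (hJ : IsClosed (J : Set A)) {x : A}
    (hx : IsSelfAdjoint x) (hxJ : x ∈ J) (hxJJ : ∀ j ∈ J, x * j ∈ J) (f : ℝ → ℝ) :
    cfcₙ f x ∈ J :=
  elemental_subset_of_mul_mem hJ hx hxJ hxJJ (cfcₙ_mem_elemental f x)

/-- In the unitization the left-hand side is `(1 - a) * x * (1 - a)` with `a = cfcₙ f x`. -/
theorem sandwich_eq_cfcₙ {x : A} (hx : IsSelfAdjoint x) {f : ℝ → ℝ}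
    (hf : ContinuousOn f (quasispectrum ℝ x)) (hf0 : f 0 = 0) :
    cfcₙ f x * x * cfcₙ f x - cfcₙ f x * x - x * cfcₙ f x + x =
      cfcₙ (fun t => t * (1 - f t) ^ 2) x := by
  have hexpand : cfcₙ (fun t => t * (1 - f t) ^ 2) x =
      cfcₙ (fun t => f t * t * f t - f t * t - t * f t + t) x :=
    cfcₙ_congr fun t _ => by ring
  rw [hexpand, cfcₙ_add (fun t => f t * t * f t - f t * t - t * f t) (fun t => t) x,
    cfcₙ_sub (fun t => f t * t * f t - f t * t) (fun t => t * f t) x,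
    cfcₙ_sub (fun t => f t * t * f t) (fun t => f t * t) x,
    cfcₙ_mul (fun t => f t * t) f x, cfcₙ_mul f (fun t => t) x, cfcₙ_mul (fun t => t) f x,
    cfcₙ_id' ℝ x]

theorem norm_sandwich_cfcₙ_div_add_le [PartialOrder A] [StarOrderedRing A] {x : A}
    (hx : 0 ≤ x) {c : ℝ} (hc : 0 < c) :
    ‖cfcₙ (fun t => t / (c + t)) x * x * cfcₙ (fun t => t / (c + t)) x
      - cfcₙ (fun t => t / (c + t)) x * x - x * cfcₙ (fun t => t / (c + t)) x + x‖ ≤ c := by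
  have hσ : ∀ t ∈ quasispectrum ℝ x, 0 ≤ t := quasispectrum_nonneg_of_nonneg x hx
  have hcont : ContinuousOn (fun t : ℝ => t / (c + t)) (quasispectrum ℝ x) :=
    continuousOn_id.div (by fun_prop) fun t ht => by linarith [hσ t ht]
  rw [sandwich_eq_cfcₙ hx.isSelfAdjoint hcont (by simp)]
  refine norm_cfcₙ_le fun t ht => ?_
  have ht0 := hσ t ht
  have hct : 0 < c + t := by linarith
  calc ‖t * (1 - t / (c + t)) ^ 2‖ = c * (t / (c + t)) * (c / (c + t)) := by
        rw [Real.norm_of_nonneg (by positivity)]; field_simp; ring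
    _ ≤ c * 1 * 1 := by
        gcongr <;> rw [div_le_one hct] <;> linarith
    _ = c := by ring

end CStarAlgebra

section InnerIdeal

variable {A E : Type*} [NonUnitalCStarAlgebra A] [PartialOrder A]
  [NormedAddCommGroup E] [NormedSpace ℂ E] [SMul Aᵐᵒᵖ E] [RightCStarModule A E]

namespace RightCStarModule

def innerₗ (x : E) : E →ₗ[ℂ] A where
  toFun := inner A x
  map_add' _ _ := inner_add_right
  map_smul' _ _ := inner_smul_right_complex

lemma inner_sub_right (x y z : E) : ⟪x, y - z⟫_A = ⟪x, y⟫_A - ⟪x, z⟫_A :=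
  map_sub (innerₗ x) y z

lemma inner_sub_left (x y z : E) : ⟪x - y, z⟫_A = ⟪x, z⟫_A - ⟪y, z⟫_A := by
  rw [← star_inner z, inner_sub_right, star_sub, star_inner, star_inner]

lemma inner_op_smul_left (a : A) (x y : E) : ⟪x <• a, y⟫_A = star a * ⟪x, y⟫_A := by
  rw [← star_inner y, inner_op_smul_right, star_mul, star_inner]

lemma norm_sq_eq_norm_inner_self (x : E) : ‖x‖ ^ 2 = ‖⟪x, x⟫_A‖ := by
  rw [norm_eq_sqrt_norm_inner_self (A := A) x, Real.sq_sqrt (norm_nonneg _)]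

lemma ext_inner_left {u v : E} (h : ∀ z : E, ⟪z, u⟫_A = ⟪z, v⟫_A) : u = v := by
  rw [← sub_eq_zero, ← inner_self (A := A), inner_sub_right, h, sub_self]

def opSMulₗ (ξ : E) : A →ₗ[ℂ] E where
  toFun a := ξ <• a
  map_add' a b := ext_inner_left fun z => by
    rw [inner_op_smul_right, inner_add_right, inner_op_smul_right, inner_op_smul_right, mul_add]
  map_smul' c a := ext_inner_left fun z => by
    rw [inner_op_smul_right, RingHom.id_apply, inner_smul_right_complex, inner_op_smul_right,
      mul_smul_comm]

lemma norm_op_smul_le (ξ : E) (a : A) : ‖ξ <• a‖ ≤ ‖ξ‖ * ‖a‖ := by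
  refine (pow_le_pow_iff_left₀ (norm_nonneg _) (by positivity) two_ne_zero).mp ?_
  calc ‖ξ <• a‖ ^ 2 = ‖star a * ⟪ξ, ξ⟫_A * a‖ := by
        rw [norm_sq_eq_norm_inner_self (A := A), inner_op_smul_right, inner_op_smul_left]
    _ ≤ ‖star a‖ * ‖⟪ξ, ξ⟫_A‖ * ‖a‖ := norm_mul₃_le
    _ = (‖ξ‖ * ‖a‖) ^ 2 := by rw [norm_star, ← norm_sq_eq_norm_inner_self]; ring

lemma continuous_op_smul (ξ : E) : Continuous fun a : A => ξ <• a :=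
  AddMonoidHomClass.continuous_of_bound (opSMulₗ ξ) ‖ξ‖ (norm_op_smul_le ξ)

lemma norm_op_smul_sub_self_sq (m : E) {a : A} (ha : IsSelfAdjoint a) :
    ‖m <• a - m‖ ^ 2 = ‖a * ⟪m, m⟫_A * a - a * ⟪m, m⟫_A - ⟪m, m⟫_A * a + ⟪m, m⟫_A‖ := by
  rw [norm_sq_eq_norm_inner_self (A := A)]
  simp only [inner_sub_left, inner_sub_right, inner_op_smul_left, inner_op_smul_right, ha.star_eq]
  noncomm_ring

end RightCStarModule

theorem JM_subset_BS (M : Set E) : (JM A E M : Set A) ⊆ BS A E :=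
  closure_mono <| Submodule.span_mono fun _ ⟨η, m, _, h⟩ => ⟨η, m, h⟩

theorem mul_mem_span_inner {M : Set E} (hM : ∀ η ξ : E, ∀ m ∈ M, η <• ⟪ξ, m⟫_A ∈ M) {b j : A}
    (hb : b ∈ Submodule.span ℂ {a : A | ∃ η ξ : E, a = ⟪η, ξ⟫_A})
    (hj : j ∈ Submodule.span ℂ {a : A | ∃ η : E, ∃ m ∈ M, a = ⟪η, m⟫_A}) :
    b * j ∈ Submodule.span ℂ {a : A | ∃ η : E, ∃ m ∈ M, a = ⟪η, m⟫_A} := by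
  have hbj := Submodule.apply_mem_map₂ (LinearMap.mul ℂ A) hb hj
  rw [Submodule.map₂_span_span] at hbj
  refine Submodule.span_mono ?_ hbj
  rintro _ ⟨_, ⟨α, β, rfl⟩, _, ⟨η, m, hm, rfl⟩, rfl⟩
  exact ⟨α, β <• ⟪η, m⟫_A, hM β η m hm, RightCStarModule.inner_op_smul_right.symm⟩

theorem mul_mem_JM {M : Set E} (hM : ∀ η ξ : E, ∀ m ∈ M, η <• ⟪ξ, m⟫_A ∈ M) {b j : A}
    (hb : b ∈ BS A E) (hj : j ∈ JM A E M) : b * j ∈ JM A E M :=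
  map_mem_closure₂' continuous_const_mul continuous_mul_const hb hj fun _ hb _ hj =>
    mul_mem_span_inner hM hb hj

theorem EJ_JM_le {M : Submodule ℂ E} (hMc : IsClosed (M : Set E))
    (hM : ∀ η ξ : E, ∀ m ∈ M, η <• ⟪ξ, m⟫_A ∈ M) : EJ A E (JM A E M : Set A) ≤ M := by
  refine Submodule.topologicalClosure_minimal _ (Submodule.span_le.mpr ?_) hMc
  rintro _ ⟨ξ, a, ha, rfl⟩
  have hspan : Submodule.span ℂ {a : A | ∃ η : E, ∃ m ∈ M, a = ⟪η, m⟫_A} ≤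
      M.comap (RightCStarModule.opSMulₗ ξ) :=
    Submodule.span_le.mpr fun _ ⟨η, m, hm, h⟩ => h ▸ hM ξ η m hm
  exact hMc.closure_subset <| map_mem_closure (f := fun b : A => ξ <• b)
    (RightCStarModule.continuous_op_smul ξ) ha fun _ hj => hspan hj

variable [StarOrderedRing A]

theorem tendsto_op_smul_cfcₙ_div_add (m : E) :
    Tendsto (fun c : ℝ => m <• cfcₙ (fun t => t / (c + t)) ⟪m, m⟫_A) (𝓝[>] 0) (𝓝 m) := by
  rw [tendsto_iff_norm_sub_tendsto_zero]
  refine squeeze_zero' (.of_forall fun _ => norm_nonneg _) ?_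
    ((Real.continuous_sqrt.tendsto' 0 0 Real.sqrt_zero).mono_left nhdsWithin_le_nhds)
  filter_upwards [self_mem_nhdsWithin] with c (hc : 0 < c)
  rw [Real.le_sqrt (norm_nonneg _) hc.le,
    RightCStarModule.norm_op_smul_sub_self_sq m (cfcₙ_predicate _ _)]
  exact norm_sandwich_cfcₙ_div_add_le RightCStarModule.inner_self_nonneg hc

theorem subset_EJ_JM {M : Set E} (hM : ∀ η ξ : E, ∀ m ∈ M, η <• ⟪ξ, m⟫_A ∈ M) :
    M ⊆ EJ A E (JM A E M : Set A) := by
  intro m hm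
  have hxJ : ⟪m, m⟫_A ∈ JM A E M :=
    Submodule.le_topologicalClosure _ (Submodule.subset_span ⟨m, m, hm, rfl⟩)
  have hxB : ⟪m, m⟫_A ∈ BS A E := subset_closure (Submodule.subset_span ⟨m, m, rfl⟩)
  have happrox (c : ℝ) : m <• cfcₙ (fun t => t / (c + t)) ⟪m, m⟫_A ∈ EJ A E (JM A E M : Set A) :=
    Submodule.le_topologicalClosure _ <| Submodule.subset_span ⟨m, _,
      cfcₙ_mem_of_mul_mem (Submodule.isClosed_topologicalClosure _)
        (.of_nonneg RightCStarModule.inner_self_nonneg) hxJ (fun _ => mul_mem_JM hM hxB) _, rfl⟩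
  exact (Submodule.isClosed_topologicalClosure _).mem_of_tendsto (tendsto_op_smul_cfcₙ_div_add m)
    (.of_forall happrox)

end InnerIdeal

variable {A E : Type*} [NonUnitalCStarAlgebra A] [PartialOrder A] [StarOrderedRing A]
  [NormedAddCommGroup E] [NormedSpace ℂ E] [SMul Aᵐᵒᵖ E] [RightCStarModule A E]

/-- If `M` is a closed subspace of `E` invariant under all rank-one operators
`θ_{η,ξ} : x ↦ η • ⟪ξ, x⟫`, then `J(M)`, the closed span of `{⟪η, m⟫ : η ∈ E, m ∈ M}`, is a
closed left ideal of `B = closure span ⟪E,E⟫`, and `M = E(J(M))`. -/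
theorem JM_left_ideal_and_M_eq_EJ_JM (M : Submodule ℂ E) (hMclosed : IsClosed (M : Set E))
    (hMinv : ∀ η ξ : E, ∀ m ∈ M, η <• ⟪ξ, m⟫_A ∈ M) :
    ((JM A E (M : Set E) : Set A) ⊆ BS A E) ∧
    (∀ b ∈ BS A E, ∀ j ∈ JM A E (M : Set E), b * j ∈ JM A E (M : Set E)) ∧
    EJ A E (JM A E (M : Set E) : Set A) = M := by
  refine ⟨JM_subset_BS (M : Set E), fun _ hb _ hj => mul_mem_JM hMinv hb hj,
    le_antisymm (EJ_JM_le hMclosed hMinv) ?_⟩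
  exact subset_EJ_JM hMinv
end

section
/- Let E be a Hilbert C*-module over a C*-algebra A and let J be a closed left ideal of the C*-algebra B = closure of span⟨E,E⟩. Then J = J(E(J)), i.e., J equals the closed linear span of {⟨η, m⟩ : η ∈ E, m ∈ E(J)}, where E(J) is the closed span of {ξa : ξ ∈ E, a ∈ J}. -/
open scoped InnerProductSpace RightActions
open Filter Topology

variable {A E : Type*} [NonUnitalCStarAlgebra A] [PartialOrder A] [StarOrderedRing A]
  [NormedAddCommGroup E] [NormedSpace ℂ E] [SMul Aᵐᵒᵖ E] [RightCStarModule A E]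

/-!
`J(E(J)) ⊆ J` because `⟪η, ξ <• a⟫ = ⟪η, ξ⟫ * a` and `J` is a closed left ideal of `B`; the same
identity gives `B * J ⊆ J(E(J))`. For `j ∈ J`, the C⋆-algebra generated by `j⋆j` lies in `J`, being
contained in any closed subalgebra containing `j⋆j`. It contains `u = g(j⋆j)` for
`g t = t / (|t| + δ)`, and `‖j - j u‖² = ‖(j⋆j) (1 - g(j⋆j))²‖ ≤ sup_{t ≥ 0} t δ² / (t + δ)² ≤ δ`.
Hence `j` lies in the closure of `B * J`, so in `J(E(J))`.
-/

lemma Submodule.topologicalClosure_span_le_comap {R M N : Type*} [Semiring R]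
    [AddCommMonoid M] [Module R M] [TopologicalSpace M] [ContinuousAdd M] [ContinuousConstSMul R M]
    [AddCommMonoid N] [Module R N] [TopologicalSpace N] (f : M →L[R] N) {s : Set M}
    {p : Submodule R N} (hp : IsClosed (p : Set N)) (h : ∀ x ∈ s, f x ∈ p) :
    (span R s).topologicalClosure ≤ p.comap (f : M →ₗ[R] N) :=
  topologicalClosure_minimal _ (span_le.2 h) (hp.preimage f.continuous)

section CStarAlgebra

variable {C : Type*} [NonUnitalCStarAlgebra C]

lemma NonUnitalStarAlgebra.elemental_subset_of_mul_mem {S : Submodule ℂ C}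
    (hS : IsClosed (S : Set C)) (hmul : ∀ x ∈ S, ∀ y ∈ S, x * y ∈ S)
    {b : C} (hb : b ∈ S) (hb' : IsSelfAdjoint b) :
    (elemental ℂ b : Set C) ⊆ S := by
  let T : NonUnitalSubalgebra ℂ C := { S with mul_mem' := fun hx hy => hmul _ hx _ hy }
  have hT : NonUnitalAlgebra.adjoin ℂ ({b} ∪ star {b}) ≤ T :=
    NonUnitalAlgebra.adjoin_le <| by
      rw [Set.star_singleton, hb'.star_eq, Set.union_self, Set.singleton_subset_iff]
      exact hb
  exact closure_minimal (fun x hx => show x ∈ T from hT hx) hS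

lemma star_mul_self_sub_mul_cfcₙ (j : C) {g : ℝ → ℝ} (hg : Continuous g) (hg0 : g 0 = 0) :
    star (j - j * cfcₙ g (star j * j)) * (j - j * cfcₙ g (star j * j)) =
      cfcₙ (fun t => t * (1 - g t) ^ 2) (star j * j) := by
  calc _ = (star j * j - cfcₙ g (star j * j) * (star j * j))
        - (star j * j - cfcₙ g (star j * j) * (star j * j)) * cfcₙ g (star j * j) := by
        rw [star_sub, star_mul, (cfcₙ_predicate g (star j * j)).star_eq]
        noncomm_ring
    _ = cfcₙ (fun t => (t - g t * t) - (t - g t * t) * g t) (star j * j) := by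
        rw [cfcₙ_sub _ _ (star j * j), cfcₙ_mul _ _ (star j * j), cfcₙ_sub _ _ (star j * j),
          cfcₙ_mul _ _ (star j * j), cfcₙ_id' ℝ (star j * j)]
    _ = _ := by congr 1; ext t; ring

lemma mem_closure_mul_elemental_star_mul_self [PartialOrder C] [StarOrderedRing C] (j : C) :
    j ∈ closure ((j * ·) '' (NonUnitalStarAlgebra.elemental ℂ (star j * j) : Set C)) := by
  rw [Metric.mem_closure_iff]
  intro ε hε
  set δ := ε ^ 2 / 2
  have hδ : 0 < δ := half_pos (by positivity)
  have hδε : δ < ε ^ 2 := half_lt_self (by positivity)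
  set g : ℝ → ℝ := fun t => t / (|t| + δ)
  have hg : Continuous g :=
    continuous_id.div (continuous_abs.add continuous_const) fun t => by positivity
  refine ⟨_, ⟨cfcₙ g (star j * j),
    cfcₙ_mem (hs := NonUnitalStarAlgebra.elemental.isClosed ℂ _) g
      (NonUnitalStarAlgebra.elemental.self_mem ℂ _), rfl⟩, ?_⟩
  have hbound : ‖cfcₙ (fun t => t * (1 - g t) ^ 2) (star j * j)‖ ≤ δ := by
    refine norm_cfcₙ_le fun t ht => ?_
    have ht0 : 0 ≤ t := quasispectrum_nonneg_of_nonneg _ (star_mul_self_nonneg j) t ht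
    have hformula : t * (1 - g t) ^ 2 = δ * (t * δ / (t + δ) ^ 2) := by
      simp only [g, abs_of_nonneg ht0]
      field_simp
      ring
    rw [hformula, Real.norm_eq_abs, abs_of_nonneg (by positivity)]
    exact mul_le_of_le_one_right hδ.le ((div_le_one (by positivity)).2 (by nlinarith))
  rw [dist_eq_norm, ← sq_lt_sq₀ (norm_nonneg _) hε.le, sq, ← CStarRing.norm_star_mul_self,
    star_mul_self_sub_mul_cfcₙ j hg (by simp [g])]
  exact hbound.trans_lt hδε

end CStarAlgebra

namespace RightCStarModule

abbrev toCStarModuleMulOpposite : CStarModule Aᵐᵒᵖ E where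
  inner x y := MulOpposite.op ⟪x, y⟫_A
  inner_add_right := by simp [inner_add_right]
  inner_self_nonneg := inner_self_nonneg (A := A)
  inner_self := by simp [inner_self (A := A)]
  inner_op_smul_right {a x y} := congrArg MulOpposite.op (inner_op_smul_right (a := a.unop))
  inner_smul_right_complex := by simp [inner_smul_right_complex]
  star_inner x y := congrArg MulOpposite.op (star_inner x y)
  norm_eq_sqrt_norm_inner_self x := by
    simp [norm_eq_sqrt_norm_inner_self (A := A) x]; rfl

lemma norm_inner_le (x y : E) : ‖⟪x, y⟫_A‖ ≤ ‖x‖ * ‖y‖ :=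
  letI := toCStarModuleMulOpposite (A := A) (E := E)
  CStarModule.norm_inner_le (A := Aᵐᵒᵖ) E

variable (A) in
noncomputable def innerRightL (x : E) : E →L[ℂ] A :=
  LinearMap.mkContinuous
    { toFun y := ⟪x, y⟫_A
      map_add' _ _ := inner_add_right
      map_smul' _ _ := inner_smul_right_complex }
    ‖x‖ (norm_inner_le x)

@[simp]
lemma innerRightL_apply (x y : E) : innerRightL A x y = ⟪x, y⟫_A := rfl

end RightCStarModule

open RightCStarModule

omit [StarOrderedRing A] in
lemma star_mem_BS {b : A} (hb : b ∈ BS A E) : star b ∈ BS A E := by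
  refine map_mem_closure continuous_star hb fun x hx => ?_
  induction hx using Submodule.span_induction with
  | mem x hx =>
    obtain ⟨η, ξ, rfl⟩ := hx
    exact Submodule.subset_span ⟨ξ, η, star_inner η ξ⟩
  | zero => simp
  | add x y _ _ hx hy => simpa using Submodule.add_mem _ hx hy
  | smul c x _ hx => simpa using Submodule.smul_mem _ (star c) hx

lemma JM_EJ_le {J : Submodule ℂ A} (hJclosed : IsClosed (J : Set A))
    (hJleft : ∀ b ∈ BS A E, ∀ j ∈ J, b * j ∈ J) : JM A E (EJ A E (J : Set A) : Set E) ≤ J := by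
  refine Submodule.topologicalClosure_minimal _ (Submodule.span_le.2 ?_) hJclosed
  rintro _ ⟨η, m, hm, rfl⟩
  refine Submodule.topologicalClosure_span_le_comap (innerRightL A η) hJclosed ?_ hm
  rintro _ ⟨ξ, a, ha, rfl⟩
  simpa [inner_op_smul_right] using
    hJleft _ (subset_closure (Submodule.subset_span ⟨η, ξ, rfl⟩)) a ha

omit [StarOrderedRing A] in
lemma mul_mem_JM_EJ {J : Set A} {b i : A} (hb : b ∈ BS A E) (hi : i ∈ J) :
    b * i ∈ JM A E (EJ A E J : Set E) := by
  refine Submodule.topologicalClosure_span_le_comap ((ContinuousLinearMap.mul ℂ A).flip i)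
    (Submodule.isClosed_topologicalClosure _) ?_ hb
  rintro _ ⟨η, ξ, rfl⟩
  have hξi : ξ <• i ∈ EJ A E J :=
    Submodule.le_topologicalClosure _ (Submodule.subset_span ⟨ξ, i, hi, rfl⟩)
  change ⟪η, ξ⟫_A * i ∈ JM A E _
  rw [← inner_op_smul_right]
  exact Submodule.le_topologicalClosure _ (Submodule.subset_span ⟨η, ξ <• i, hξi, rfl⟩)

/-- If `J` is a closed left ideal of the C*-algebra `B = closure span ⟪E,E⟫`, then
`J = J(E(J))`. -/
theorem J_eq_JM_EJ (J : Submodule ℂ A) (hJB : (J : Set A) ⊆ BS A E)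
    (hJclosed : IsClosed (J : Set A))
    (hJleft : ∀ b ∈ BS A E, ∀ j ∈ J, b * j ∈ J) :
    JM A E ((EJ A E (J : Set A) : Submodule ℂ E) : Set E) = J := by
  refine le_antisymm (JM_EJ_le hJclosed hJleft) fun j hj => ?_
  have hJmul : ∀ x ∈ J, ∀ y ∈ J, x * y ∈ J := fun x hx y hy => hJleft x (hJB hx) y hy
  have hb : star j * j ∈ J := hJleft _ (star_mem_BS (hJB hj)) j hj
  have hsub := NonUnitalStarAlgebra.elemental_subset_of_mul_mem hJclosed hJmul hb
    (.star_mul_self j)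
  refine closure_minimal ?_ (Submodule.isClosed_topologicalClosure _)
    (mem_closure_mul_elemental_star_mul_self j)
  rintro _ ⟨u, hu, rfl⟩
  exact mul_mem_JM_EJ (hJB hj) (hsub hu)
end

section
/- Let A be a C*-algebra and Φ : A → A a linear map that leaves every closed left ideal of A invariant (Φ(J) ⊆ J for each closed left ideal J). Then Φ(ba) = Φ(b)a for all a, b ∈ A. -/
open scoped InnerProductSpace RightActions
open Filter Topology

/-- The Hilbert C⋆-module class as it stood in the older Mathlib (right `A`-action via `Aᵐᵒᵖ`,
inner product `A`-linear on the right: `⟪x, y <• a⟫ = ⟪x, y⟫ * a`). -/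
class CStarModuleOld (A E : Type*) [NonUnitalSemiring A] [StarRing A] [Module ℂ A]
    [AddCommGroup E] [Module ℂ E] [PartialOrder A] [SMul Aᵐᵒᵖ E] [Norm A] [Norm E]
    extends Inner A E where
  inner_add_right {x} {y} {z} : inner x (y + z) = inner x y + inner x z
  inner_self_nonneg {x} : 0 ≤ inner x x
  inner_self {x} : inner x x = 0 ↔ x = 0
  inner_op_smul_right {a : A} {x y : E} : inner x (y <• a) = inner x y * a
  inner_smul_right_complex {z : ℂ} {x} {y} : inner x (z • y) = z • inner x y
  star_inner x y : star (inner x y) = inner y x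
  norm_eq_sqrt_norm_inner_self x : ‖x‖ = √‖inner x x‖

/-!
Fix a maximal left ideal `N` of the unitization `R` of `B`; it suffices to show
`Φ(ba) - Φ(b)a ∈ N`, because in a C*-algebra the maximal left ideals intersect in `0`
(a nonzero `y` lies outside any maximal left ideal containing the self-adjoint non-unit
`±‖y⋆y‖ - y⋆y`).

For every `r ∈ R` the set `{x ∈ B | x r ∈ N}` is a closed left ideal of `B`, so `Φ` preserves it.
A Gelfand–Mazur argument on the Banach space `R ⧸ N` produces `μ ∈ ℂ` and `w ∈ R` with
`w ≡ c` and `(w - 1) c ≡ 0` modulo `N`, where `c = a - μ`: otherwise right multiplication by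
every `a - μ` would be a bijection of `R ⧸ N`, and right multiplication by `a` would have empty
spectrum. With `u = bw ∈ B`, the ideals for `r = 1`, `1 - c` and `c` give
`Φ(u) ≡ Φ(ba) - μ Φ(b)`, `Φ(u) ≡ Φ(u) c` and `Φ(u) c ≡ Φ(b) c`, which add up to the claim.
-/

namespace Ideal

section Ring

variable {R : Type*} [Ring R] {N : Ideal R} {c : R}

theorem IsMaximal.mem_of_mul_mem (hN : N.IsMaximal)
    (hc : ∀ w, w - c ∈ N → (w - 1) * c ∉ N) {z : R} (hz : z * c ∈ N) : z ∈ N := by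
  by_contra hzN
  obtain ⟨y, i, hi, hyi⟩ := hN.exists_inv hzN
  refine hc (c - (c - 1) * i) (by simpa using N.neg_mem (N.mul_mem_left (c - 1) hi)) ?_
  have hw : c - (c - 1) * i - 1 = (c - 1) * y * z := by
    calc c - (c - 1) * i - 1 = (c - 1) * (1 - i) := by noncomm_ring
      _ = (c - 1) * y * z := by rw [← hyi]; noncomm_ring
  rw [hw, mul_assoc]
  exact N.mul_mem_left _ hz

theorem IsMaximal.mul_mem_of_mem (hN : N.IsMaximal) (hc : ∀ z, z * c ∈ N → z ∈ N)
    {n : R} (hn : n ∈ N) : n * c ∈ N := by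
  by_contra hncN
  obtain ⟨r, i, hi, hri⟩ := hN.exists_inv hncN
  have h1 : 1 - c * r * n ∈ N := hc _ <| by
    have : (1 - c * r * n) * c = c * i := by
      calc (1 - c * r * n) * c = c * (1 - r * (n * c)) := by noncomm_ring
        _ = c * i := by rw [← hri]; noncomm_ring
    rw [this]
    exact N.mul_mem_left c hi
  exact hN.ne_top ((eq_top_iff_one N).2 (by simpa using N.add_mem h1 (N.mul_mem_left (c * r) hn)))

end Ring

section Banach

variable {R : Type*} [NormedRing R] [NormedAlgebra ℂ R]

noncomputable def quotMulRight (N : Ideal R) (r : R) (hr : ∀ n ∈ N, n * r ∈ N) :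
    (R ⧸ N.restrictScalars ℂ) →L[ℂ] R ⧸ N.restrictScalars ℂ :=
  (N.restrictScalars ℂ).liftQL
    ((N.restrictScalars ℂ).mkQL ∘L (ContinuousLinearMap.mul ℂ R).flip r)
    fun n hn => by simpa using hr n hn

@[simp]
theorem quotMulRight_mk (N : Ideal R) (r : R) (hr : ∀ n ∈ N, n * r ∈ N) (x : R) :
    quotMulRight N r hr (Submodule.Quotient.mk x) = Submodule.Quotient.mk (x * r) :=
  rfl

theorem IsMaximal.bijective_quotMulRight {N : Ideal R} (hN : N.IsMaximal) {c : R}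
    (hc : ∀ z, z * c ∈ N → z ∈ N) :
    Function.Bijective (quotMulRight N c fun _ => hN.mul_mem_of_mem hc) := by
  constructor
  · rw [injective_iff_map_eq_zero]
    intro v hv
    obtain ⟨x, rfl⟩ := Submodule.Quotient.mk_surjective _ v
    rw [quotMulRight_mk, Submodule.Quotient.mk_eq_zero] at hv
    exact (Submodule.Quotient.mk_eq_zero _).2 (hc x hv)
  · have hcN : c ∉ N := fun h => hN.ne_top ((eq_top_iff_one N).2 (hc 1 (by simpa using h)))
    obtain ⟨z, i, hi, hzi⟩ := hN.exists_inv hcN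
    intro v
    obtain ⟨y, rfl⟩ := Submodule.Quotient.mk_surjective _ v
    refine ⟨Submodule.Quotient.mk (y * z), ?_⟩
    rw [quotMulRight_mk, Submodule.Quotient.eq]
    have : y * z * c - y = -(y * i) := by
      rw [mul_assoc, eq_sub_of_add_eq hzi]
      noncomm_ring
    simpa [this] using N.mul_mem_left y hi

theorem IsMaximal.exists_sub_mem_and_sub_one_mul_mem [CompleteSpace R] {N : Ideal R}
    (hN : N.IsMaximal) (a : R) :
    ∃ (μ : ℂ) (w : R), w - (a - algebraMap ℂ R μ) ∈ N ∧
      (w - 1) * (a - algebraMap ℂ R μ) ∈ N := by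
  by_contra! h
  have hinj (μ : ℂ) (z : R) : z * (a - algebraMap ℂ R μ) ∈ N → z ∈ N :=
    hN.mem_of_mul_mem (h μ)
  have haN : ∀ n ∈ N, n * a ∈ N := fun n => by simpa using hN.mul_mem_of_mem (hinj 0)
  have : IsClosed ((N.restrictScalars ℂ : Submodule ℂ R) : Set R) := hN.isClosed
  have : Nontrivial (R ⧸ N.restrictScalars ℂ) :=
    Submodule.Quotient.nontrivial_iff.2 (by simpa using hN.ne_top)
  obtain ⟨μ, hμ⟩ := spectrum.nonempty (quotMulRight N a haN)
  have hμT : algebraMap ℂ _ μ - quotMulRight N a haN =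
      -quotMulRight N (a - algebraMap ℂ R μ) (fun _ => hN.mul_mem_of_mem (hinj μ)) := by
    refine ContinuousLinearMap.ext fun v => ?_
    obtain ⟨x, rfl⟩ := Submodule.Quotient.mk_surjective _ v
    simp [mul_sub, Algebra.algebraMap_eq_smul_one]
  rw [spectrum.mem_iff, hμT] at hμ
  exact hμ (ContinuousLinearMap.isUnit_iff_bijective.2 (hN.bijective_quotMulRight (hinj μ))).neg

end Banach

end Ideal

theorem IsSelfAdjoint.isUnit_of_mul_eq_one {R : Type*} [Monoid R] [StarMul R] {s z : R}
    (hs : IsSelfAdjoint s) (h : z * s = 1) : IsUnit s := by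
  have h' : s * star z = 1 := by simpa [hs.star_eq] using congrArg star h
  exact ⟨⟨s, z, by rwa [← left_inv_eq_right_inv h h'] at h', h⟩, rfl⟩

theorem IsSelfAdjoint.exists_isMaximal_mem {R : Type*} [Ring R] [StarRing R] {s : R}
    (hs : IsSelfAdjoint s) (hu : ¬IsUnit s) : ∃ N : Ideal R, N.IsMaximal ∧ s ∈ N := by
  have hspan : Ideal.span {s} ≠ ⊤ := fun htop => by
    obtain ⟨z, hz⟩ := Submodule.mem_span_singleton.1 ((Ideal.eq_top_iff_one _).1 htop)
    exact hu (hs.isUnit_of_mul_eq_one hz)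
  obtain ⟨N, hN, hle⟩ := Ideal.exists_le_maximal _ hspan
  exact ⟨N, hN, hle (Ideal.mem_span_singleton_self s)⟩

theorem CStarAlgebra.eq_zero_of_forall_isMaximal_mem {R : Type*} [CStarAlgebra R] {y : R}
    (hy : ∀ N : Ideal R, N.IsMaximal → y ∈ N) : y = 0 := by
  by_contra hy0
  have : Nontrivial R := ⟨⟨y, 0, hy0⟩⟩
  have hs : IsSelfAdjoint (star y * y) := .star_mul_self y
  have hs0 : ‖star y * y‖ ≠ 0 := by simpa using hy0
  obtain ⟨r, hr0, hr⟩ : ∃ r : ℝ, r ≠ 0 ∧ r ∈ spectrum ℝ (star y * y) := by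
    rcases CStarAlgebra.norm_or_neg_norm_mem_spectrum hs with h | h
    · exact ⟨_, hs0, h⟩
    · exact ⟨_, neg_ne_zero.2 hs0, h⟩
  obtain ⟨N, hN, hrN⟩ := ((IsSelfAdjoint.algebraMap R (.all r)).sub hs).exists_isMaximal_mem hr
  have hrN' : algebraMap ℝ R r ∈ N := by
    simpa only [sub_add_cancel] using N.add_mem hrN (N.mul_mem_left (star y) (hy N hN))
  refine hN.ne_top (N.eq_top_of_isUnit_mem hrN' ?_)
  simpa using (Units.mk0 r hr0).isUnit.map (algebraMap ℝ R)

def LinearMap.PreservesClosedLeftIdeals {S A : Type*} [Semiring S] [NonUnitalNonAssocSemiring A]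
    [TopologicalSpace A] [Module S A] (Φ : A →ₗ[S] A) : Prop :=
  ∀ J : Submodule S A, IsClosed (J : Set A) → (∀ a : A, ∀ j ∈ J, a * j ∈ J) → ∀ j ∈ J, Φ j ∈ J

namespace LinearMap.PreservesClosedLeftIdeals

variable {B : Type*} [NonUnitalNormedRing B] [NormedSpace ℂ B] [IsScalarTower ℂ B B]
  [SMulCommClass ℂ B B] [RegularNormedAlgebra ℂ B] {Φ : B →ₗ[ℂ] B}

theorem inr_mul_mem (hΦ : Φ.PreservesClosedLeftIdeals) {N : Ideal (Unitization ℂ B)}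
    (hN : IsClosed (N : Set (Unitization ℂ B))) (r : Unitization ℂ B) {x : B}
    (hx : (x : Unitization ℂ B) * r ∈ N) : (Φ x : Unitization ℂ B) * r ∈ N := by
  let J : Submodule ℂ B :=
    { carrier := {x | (x : Unitization ℂ B) * r ∈ N}
      add_mem' := fun hx hy => by simpa [add_mul] using N.add_mem hx hy
      zero_mem' := by simp
      smul_mem' := fun c x hx => by
        simpa [Unitization.inr_smul, smul_mul_assoc] using N.smul_of_tower_mem c hx }
  refine hΦ J ?_ (fun a j hj => ?_) x hx
  · exact hN.preimage (Unitization.continuous_inr.mul continuous_const)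
  · show ((a * j : B) : Unitization ℂ B) * r ∈ N
    rw [Unitization.inr_mul, mul_assoc]
    exact N.mul_mem_left _ hj

theorem inr_map_mul_sub_mem [CompleteSpace B] (hΦ : Φ.PreservesClosedLeftIdeals)
    {N : Ideal (Unitization ℂ B)} (hN : N.IsMaximal) (a b : B) :
    ((Φ (b * a) - Φ b * a : B) : Unitization ℂ B) ∈ N := by
  obtain ⟨μ, w, hw, hw1⟩ := hN.exists_sub_mem_and_sub_one_mul_mem (a : Unitization ℂ B)
  set c := (a : Unitization ℂ B) - algebraMap ℂ _ μ
  set u : B := w.fst • b + b * w.snd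
  have hu : (u : Unitization ℂ B) = b * w := by ext <;> simp [u]
  have hμ (x : Unitization ℂ B) : μ • x = x * algebraMap ℂ _ μ := by
    rw [← Algebra.commutes, ← Algebra.smul_def]
  have H₁ := hΦ.inr_mul_mem hN.isClosed 1 (x := u - (b * a - μ • b)) <| by
    convert N.mul_mem_left b hw using 1
    simp [c, hu, hμ]
    noncomm_ring
  have H₂ := hΦ.inr_mul_mem hN.isClosed c (x := u - b) <| by
    convert N.mul_mem_left b hw1 using 1
    simp [hu]
    noncomm_ring
  have H₃ := hΦ.inr_mul_mem hN.isClosed (1 - c) (x := u) <| by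
    convert N.mul_mem_left b (N.sub_mem hw hw1) using 1
    rw [hu]
    noncomm_ring
  have hsum : ((Φ (b * a) - Φ b * a : B) : Unitization ℂ B) =
      -((Φ (u - (b * a - μ • b)) : Unitization ℂ B) * 1) + (Φ u : Unitization ℂ B) * (1 - c) +
        (Φ (u - b) : Unitization ℂ B) * c := by
    simp [c, hμ]
    noncomm_ring
  rw [hsum]
  exact N.add_mem (N.add_mem (N.neg_mem H₁) H₃) H₂

end LinearMap.PreservesClosedLeftIdeals

variable {A E : Type*} [NonUnitalCStarAlgebra A] [PartialOrder A] [StarOrderedRing A]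
  [NormedAddCommGroup E] [NormedSpace ℂ E] [SMul Aᵐᵒᵖ E] [CStarModuleOld A E]

/-- Johnson's theorem for C*-algebras: a linear map on a C*-algebra leaving every closed left
ideal invariant satisfies `Φ(ba) = Φ(b)a`. -/
theorem johnson {B : Type*} [NonUnitalCStarAlgebra B] (Φ : B →ₗ[ℂ] B)
    (hΦ : ∀ J : Submodule ℂ B, IsClosed (J : Set B) →
      (∀ a : B, ∀ j ∈ J, a * j ∈ J) → ∀ j ∈ J, Φ j ∈ J) :
    ∀ a b : B, Φ (b * a) = Φ b * a := by
  intro a b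
  have h := CStarAlgebra.eq_zero_of_forall_isMaximal_mem fun _ hN =>
    LinearMap.PreservesClosedLeftIdeals.inr_map_mul_sub_mem hΦ hN a b
  exact sub_eq_zero.1 (Unitization.inr_injective (h.trans (Unitization.inr_zero ℂ).symm))
end

section
/- Let A be a C*-algebra with a contractive approximate unit (e_i), acting isometrically and non-degenerately on a Banach space X, and let B : A → A be a bounded left centralizer (B(ab) = B(a)b). Then the net of operators (B(e_i))_i ⊆ B(X) converges pointwise (in the strong operator topology) to a bounded operator b on X with ‖b‖ ≤ ‖B‖, and b satisfies b(ax) = B(a)x for all a ∈ A, x ∈ X. -/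
open scoped InnerProductSpace RightActions
open Filter Topology

variable {A E : Type*} [NonUnitalCStarAlgebra A] [PartialOrder A] [StarOrderedRing A]
  [NormedAddCommGroup E] [NormedSpace ℂ E] [SMul Aᵐᵒᵖ E] [RightCStarModule A E]

/-- Let `A` be a C*-algebra with a contractive approximate unit `(eᵢ)`, acting isometrically and
non-degenerately on a Banach space `X` via `π`, and let `B` be a bounded left centralizer of `A`.
Then `(π (B eᵢ))ᵢ` converges in the strong operator topology to a bounded operator `b` on `X`
with `‖b‖ ≤ ‖B‖` and `b (π a x) = π (B a) x` for all `a, x`. -/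
theorem left_centralizer_sot_limit {B' : Type*} [NonUnitalCStarAlgebra B']
    {X : Type*} [NormedAddCommGroup X] [NormedSpace ℂ X] [CompleteSpace X]
    (π : B' →ₗ[ℂ] (X →L[ℂ] X))
    (hπmul : ∀ a b : B', π (a * b) = π a ∘L π b)
    (hπiso : ∀ a : B', ‖π a‖ = ‖a‖)
    (hπnondeg : Dense ((Submodule.span ℂ {x : X | ∃ (a : B') (y : X), x = π a y}) : Set X))
    {ι : Type*} [SemilatticeSup ι] [Nonempty ι] (e : ι → B')
    (he_contr : ∀ i, ‖e i‖ ≤ 1)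
    (he_left : ∀ a : B', Tendsto (fun i => e i * a) atTop (𝓝 a))
    (he_right : ∀ a : B', Tendsto (fun i => a * e i) atTop (𝓝 a))
    (B : B' →L[ℂ] B') (hB : ∀ a b : B', B (a * b) = B a * b) :
    ∃ b : X →L[ℂ] X, ‖b‖ ≤ ‖B‖ ∧
      (∀ x : X, Tendsto (fun i => π (B (e i)) x) atTop (𝓝 (b x))) ∧
      (∀ (a : B') (x : X), b (π a x) = π (B a) x) := by
    classical
  set f : ι → X →L[ℂ] X := fun i => π (B (e i)) with hf
  have hπcont : Continuous π := (AddMonoidHomClass.isometry_of_norm π hπiso).continuous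
  have hbd : ∀ i, ‖f i‖ ≤ ‖B‖ := by
    intro i
    simp only [hf, hπiso]
    calc ‖B (e i)‖ ≤ ‖B‖ * ‖e i‖ := B.le_opNorm _
      _ ≤ ‖B‖ * 1 := by gcongr; exact he_contr i
      _ = ‖B‖ := mul_one _
  have hbase : ∀ (a : B') (y : X), Tendsto (fun i => f i (π a y)) atTop (𝓝 (π (B a) y)) := by
    intro a y
    have h1 : ∀ i, f i (π a y) = π (B (e i * a)) y := by
      intro i
      calc f i (π a y) = (π (B (e i)) ∘L π a) y := rfl
        _ = π (B (e i) * a) y := by rw [hπmul]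
        _ = π (B (e i * a)) y := by rw [hB]
    simp only [h1]
    have hc : Continuous fun z : B' => π (B z) y :=
      ((ContinuousLinearMap.apply ℂ X y).continuous.comp hπcont).comp B.continuous
    exact (hc.tendsto a).comp (he_left a)
  have hspan : ∀ x ∈ Submodule.span ℂ {x : X | ∃ (a : B') (y : X), x = π a y},
      ∃ z, Tendsto (fun i => f i x) atTop (𝓝 z) := by
    intro x hx
    induction hx using Submodule.span_induction with
    | mem x hx =>
        obtain ⟨a, y, rfl⟩ := hx
        exact ⟨_, hbase a y⟩
    | zero => exact ⟨0, by simpa using (tendsto_const_nhds : Tendsto (fun _ : ι => (0 : X)) atTop _)⟩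
    | add x y _ _ hx hy =>
        obtain ⟨zx, hzx⟩ := hx
        obtain ⟨zy, hzy⟩ := hy
        exact ⟨zx + zy, by simpa [map_add] using hzx.add hzy⟩
    | smul c x _ hx =>
        obtain ⟨z, hz⟩ := hx
        exact ⟨c • z, by simpa [map_smul] using hz.const_smul c⟩
  have hP : ∀ x : X, ∃ z, Tendsto (fun i => f i x) atTop (𝓝 z) := by
    intro x
    apply cauchySeq_tendsto_of_complete
    rw [Metric.cauchySeq_iff]
    intro ε hε
    set δ := ε / 3 / (‖B‖ + 1) with hδ
    have hδpos : 0 < δ := by positivity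
    have hBδ : ‖B‖ * δ ≤ ε / 3 := by
      have h1 : ‖B‖ * δ ≤ (‖B‖ + 1) * δ := by nlinarith [norm_nonneg B, hδpos.le]
      have h2 : (‖B‖ + 1) * δ = ε / 3 := by
        rw [hδ]; field_simp
      linarith
    obtain ⟨y, hyS, hy⟩ := SeminormedAddCommGroup.mem_closure_iff.mp (hπnondeg x) δ hδpos
    obtain ⟨z, hz⟩ := hspan y hyS
    obtain ⟨N, hN⟩ := Metric.cauchySeq_iff.mp hz.cauchySeq (ε / 3) (by linarith)
    refine ⟨N, fun i hi j hj => ?_⟩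
    have key : ∀ k, ‖f k x - f k y‖ ≤ ε / 3 := by
      intro k
      calc ‖f k x - f k y‖ = ‖f k (x - y)‖ := by rw [map_sub]
        _ ≤ ‖f k‖ * ‖x - y‖ := (f k).le_opNorm _
        _ ≤ ‖B‖ * δ := by
            apply mul_le_mul (hbd k) hy.le (norm_nonneg _) ((norm_nonneg _).trans (hbd k))
        _ ≤ ε / 3 := hBδ
    calc dist (f i x) (f j x)
        ≤ dist (f i x) (f i y) + dist (f i y) (f j y) + dist (f j y) (f j x) := dist_triangle4 _ _ _ _
      _ < ε / 3 + ε / 3 + ε / 3 := by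
          simp only [dist_eq_norm]
          have h1 := key i
          have h2 : ‖f j y - f j x‖ ≤ ε / 3 := by rw [norm_sub_rev]; exact key j
          have h3 := hN i hi j hj
          rw [dist_eq_norm] at h3
          linarith
      _ = ε := by ring
  choose g hg using hP
  have hg0 : ∀ (a : B') (y : X), g (π a y) = π (B a) y := fun a y =>
    tendsto_nhds_unique (hg _) (hbase a y)
  have hadd : ∀ x y : X, g (x + y) = g x + g y := fun x y =>
    tendsto_nhds_unique (hg _) (by simpa [map_add] using (hg x).add (hg y))
  have hsmul : ∀ (c : ℂ) (x : X), g (c • x) = c • g x := fun c x =>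
    tendsto_nhds_unique (hg _) (by simpa [map_smul] using (hg x).const_smul c)
  have hbound : ∀ x : X, ‖g x‖ ≤ ‖B‖ * ‖x‖ := fun x =>
    le_of_tendsto (hg x).norm (Eventually.of_forall fun i =>
      ((f i).le_opNorm x).trans (mul_le_mul_of_nonneg_right (hbd i) (norm_nonneg x)))
  let L : X →ₗ[ℂ] X :=
    { toFun := g, map_add' := hadd, map_smul' := hsmul }
  refine ⟨L.mkContinuous ‖B‖ hbound, L.mkContinuous_norm_le (norm_nonneg _) hbound,
    fun x => hg x, fun a x => hg0 a x⟩
end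

section
/- Let A be a C*-algebra acting isometrically and non-degenerately on a Banach space X. Define LM_X(A) = {b ∈ B(X) : ba ∈ A for all a ∈ A}. Then the map b ↦ L_b (left multiplication by b on A) is an isometric Banach algebra isomorphism from LM_X(A) onto the algebra LC(A) of bounded left centralizers of A. -/
open scoped InnerProductSpace RightActions
open Filter Topology

variable {A E : Type*} [NonUnitalCStarAlgebra A] [PartialOrder A] [StarOrderedRing A]
  [NormedAddCommGroup E] [NormedSpace ℂ E] [SMul Aᵐᵒᵖ E] [RightCStarModule A E]

/-!
For `b ∈ LM_X(A)`, the map `Φ = π⁻¹ ∘ (b ∘ π ·)` is a left centralizer with `‖Φ‖ ≤ ‖b‖`, since `π`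
is an injective isometric homomorphism. Conversely, given a left centralizer `Φ` and an
approximate unit `(e_λ)` of `A`, `π (Φ e_λ) (∑ π aᵢ yᵢ) = ∑ π (Φ (e_λ aᵢ)) yᵢ → ∑ π (Φ aᵢ) yᵢ`, so
`‖∑ π (Φ aᵢ) yᵢ‖ ≤ ‖Φ‖ ‖∑ π aᵢ yᵢ‖`. Hence `π a y ↦ π (Φ a) y` is a well defined bounded operator
on the dense subspace spanned by `AX`, and it extends uniquely to `b ∈ B(X)` with `‖b‖ ≤ ‖Φ‖`;
uniqueness of this extension also gives `‖b‖ ≤ ‖Φ‖` for any `b` inducing `Φ`.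
-/

open scoped TensorProduct

theorem exists_approximateUnit_norm_le_one (B : Type*) [NonUnitalCStarAlgebra B] :
    ∃ l : Filter B, l.NeBot ∧ (∀ a, Tendsto (· * a) l (𝓝 a)) ∧ ∀ᶠ e in l, ‖e‖ ≤ 1 := by
  -- `B` carries no order instance; the spectral order provides the one the approximate unit needs.
  let := CStarAlgebra.spectralOrder B
  have := CStarAlgebra.spectralOrderedRing B
  have h := CStarAlgebra.increasingApproximateUnit B
  exact ⟨_, h.neBot, h.tendsto_mul_right, h.eventually_norm⟩

section LeftMultiplier

variable {B X : Type*} [NonUnitalCStarAlgebra B] [NormedAddCommGroup X] [NormedSpace ℂ X]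

noncomputable def tensorAction (π : B →ₗ[ℂ] (X →L[ℂ] X)) : B ⊗[ℂ] X →ₗ[ℂ] X :=
  TensorProduct.lift (ContinuousLinearMap.coeLM ℂ ∘ₗ π)

@[simp]
theorem tensorAction_tmul (π : B →ₗ[ℂ] (X →L[ℂ] X)) (a : B) (y : X) :
    tensorAction π (a ⊗ₜ y) = π a y := rfl

theorem denseRange_tensorAction {π : B →ₗ[ℂ] (X →L[ℂ] X)}
    (hπ : Dense ((Submodule.span ℂ {x : X | ∃ (a : B) (y : X), x = π a y}) : Set X)) :
    DenseRange (tensorAction π) :=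
  hπ.mono <| Submodule.span_le (p := LinearMap.range (tensorAction π)) |>.2 <| by
    rintro _ ⟨a, y, rfl⟩
    exact ⟨a ⊗ₜ y, rfl⟩

theorem norm_tensorAction_comp_le {π : B →ₗ[ℂ] (X →L[ℂ] X)}
    (hπmul : ∀ a b : B, π (a * b) = π a ∘L π b) (hπ : ∀ a : B, ‖π a‖ ≤ ‖a‖)
    {Φ : B →L[ℂ] B} (hΦ : ∀ a c : B, Φ (a * c) = Φ a * c) (t : B ⊗[ℂ] X) :
    ‖tensorAction (π ∘ₗ Φ.toLinearMap) t‖ ≤ ‖Φ‖ * ‖tensorAction π t‖ := by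
  obtain ⟨S, rfl⟩ := TensorProduct.exists_finset t
  simp only [map_sum, tensorAction_tmul, LinearMap.comp_apply, ContinuousLinearMap.coe_coe]
  set x := ∑ p ∈ S, π p.1 p.2
  obtain ⟨l, hl, hmul, hnorm⟩ := exists_approximateUnit_norm_le_one B
  have hπcont : Continuous π := AddMonoidHomClass.continuous_of_bound π 1 (by simpa using hπ)
  -- `π (Φ e) x = ∑ π (Φ (e * aᵢ)) yᵢ`, which tends to `∑ π (Φ aᵢ) yᵢ` along the approximate unit
  have hlim : Tendsto (fun e ↦ π (Φ e) x) l (𝓝 (∑ p ∈ S, π (Φ p.1) p.2)) := by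
    simp only [x, map_sum, ← ContinuousLinearMap.comp_apply, ← hπmul, ← hΦ]
    refine tendsto_finsetSum _ fun p _ ↦ ?_
    have : Continuous fun a ↦ π (Φ a) p.2 :=
      (ContinuousLinearMap.apply ℂ X p.2).continuous.comp (hπcont.comp Φ.continuous)
    exact (this.tendsto _).comp (hmul p.1)
  refine le_of_tendsto hlim.norm (hnorm.mono fun e he ↦ ?_)
  calc ‖π (Φ e) x‖ ≤ ‖Φ e‖ * ‖x‖ := ((π (Φ e)).le_opNorm x).trans (by gcongr; exact hπ _)
    _ ≤ ‖Φ‖ * ‖x‖ := by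
      gcongr
      simpa using Φ.le_opNorm_of_le he

theorem existsUnique_comp_eq {π : B →ₗ[ℂ] (X →L[ℂ] X)} (hπ : ∀ a : B, ‖π a‖ = ‖a‖)
    {b : X →L[ℂ] X} (hb : ∀ a : B, ∃ c : B, b ∘L π a = π c) :
    ∃! Φ : B →L[ℂ] B, ∀ a : B, π (Φ a) = b ∘L π a := by
  have hπinj : Function.Injective π := (⟨π, hπ⟩ : B →ₗᵢ[ℂ] (X →L[ℂ] X)).injective
  let e := LinearEquiv.ofInjective π hπinj
  let L : B →ₗ[ℂ] LinearMap.range π :=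
    (ContinuousLinearMap.compL ℂ X X X b ∘ₗ π).codRestrict _ fun a ↦
      let ⟨c, hc⟩ := hb a; ⟨c, hc.symm⟩
  have hL : ∀ a, π (e.symm (L a)) = b ∘L π a := fun a ↦
    congrArg Subtype.val (e.apply_symm_apply (L a))
  refine ⟨(e.symm.toLinearMap ∘ₗ L).mkContinuous ‖b‖ fun a ↦ ?_, hL, fun Ψ hΨ ↦ ?_⟩
  · simpa only [LinearMap.comp_apply, LinearEquiv.coe_coe, ← hπ, hL] using b.opNorm_comp_le (π a)
  · ext a
    exact hπinj ((hΨ a).trans (hL a).symm)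

theorem apply_mul_of_comp_eq {π : B →ₗ[ℂ] (X →L[ℂ] X)}
    (hπmul : ∀ a b : B, π (a * b) = π a ∘L π b) (hπinj : Function.Injective π)
    {b : X →L[ℂ] X} {Φ : B → B} (hbΦ : ∀ a : B, π (Φ a) = b ∘L π a) (a c : B) :
    Φ (a * c) = Φ a * c :=
  hπinj <| by rw [hbΦ, hπmul, hπmul, hbΦ, ContinuousLinearMap.comp_assoc]

theorem norm_le_of_comp_eq {π : B →ₗ[ℂ] (X →L[ℂ] X)} (hπ : ∀ a : B, ‖π a‖ = ‖a‖)
    {b : X →L[ℂ] X} {Φ : B →L[ℂ] B} (hbΦ : ∀ a : B, π (Φ a) = b ∘L π a) : ‖Φ‖ ≤ ‖b‖ :=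
  Φ.opNorm_le_bound (norm_nonneg b) fun a ↦ by
    simpa only [← hπ, hbΦ] using b.opNorm_comp_le (π a)

variable [CompleteSpace X]

noncomputable def leftMultiplier (π : B →ₗ[ℂ] (X →L[ℂ] X)) (Φ : B →L[ℂ] B) : X →L[ℂ] X :=
  (tensorAction (π ∘ₗ Φ.toLinearMap)).extendOfNorm (tensorAction π)

variable {π : B →ₗ[ℂ] (X →L[ℂ] X)} {Φ : B →L[ℂ] B}

theorem leftMultiplier_comp (hπmul : ∀ a b : B, π (a * b) = π a ∘L π b)
    (hπ : ∀ a : B, ‖π a‖ ≤ ‖a‖)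
    (hπnondeg : Dense ((Submodule.span ℂ {x : X | ∃ (a : B) (y : X), x = π a y}) : Set X))
    (hΦ : ∀ a c : B, Φ (a * c) = Φ a * c) (a : B) :
    π (Φ a) = leftMultiplier π Φ ∘L π a := by
  ext y
  exact (LinearMap.extendOfNorm_eq (denseRange_tensorAction hπnondeg)
    ⟨‖Φ‖, norm_tensorAction_comp_le hπmul hπ hΦ⟩ (a ⊗ₜ y)).symm

theorem eq_leftMultiplier (hπmul : ∀ a b : B, π (a * b) = π a ∘L π b)
    (hπ : ∀ a : B, ‖π a‖ ≤ ‖a‖)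
    (hπnondeg : Dense ((Submodule.span ℂ {x : X | ∃ (a : B) (y : X), x = π a y}) : Set X))
    (hΦ : ∀ a c : B, Φ (a * c) = Φ a * c) {b : X →L[ℂ] X} (hbΦ : ∀ a : B, π (Φ a) = b ∘L π a) :
    b = leftMultiplier π Φ :=
  (LinearMap.extendOfNorm_unique (denseRange_tensorAction hπnondeg) ‖Φ‖
    (norm_tensorAction_comp_le hπmul hπ hΦ) b (TensorProduct.ext' fun a y ↦ by simp [hbΦ])).symm

theorem norm_leftMultiplier_le (hπmul : ∀ a b : B, π (a * b) = π a ∘L π b)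
    (hπ : ∀ a : B, ‖π a‖ ≤ ‖a‖)
    (hπnondeg : Dense ((Submodule.span ℂ {x : X | ∃ (a : B) (y : X), x = π a y}) : Set X))
    (hΦ : ∀ a c : B, Φ (a * c) = Φ a * c) : ‖leftMultiplier π Φ‖ ≤ ‖Φ‖ :=
  LinearMap.opNorm_extendOfNorm_le (denseRange_tensorAction hπnondeg) (norm_nonneg Φ)
    (norm_tensorAction_comp_le hπmul hπ hΦ)

end LeftMultiplier

/-- Let the C*-algebra `A` act isometrically and non-degenerately on a Banach space `X` via `π`.
Then `b ↦ L_b` is an isometric Banach algebra isomorphism from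
`LM_X(A) = {b ∈ B(X) : bA ⊆ A}` onto the left centralizer algebra `LC(A)`: each `b ∈ LM_X(A)`
determines a unique bounded map `Φ` on `A` with `π (Φ a) = b ∘ π a`; this `Φ` is a left
centralizer with `‖Φ‖ = ‖b‖`; and every bounded left centralizer of `A` arises this way from a
unique `b ∈ LM_X(A)`. -/
theorem LM_iso_LC {B' : Type*} [NonUnitalCStarAlgebra B']
    {X : Type*} [NormedAddCommGroup X] [NormedSpace ℂ X] [CompleteSpace X]
    (π : B' →ₗ[ℂ] (X →L[ℂ] X))
    (hπmul : ∀ a b : B', π (a * b) = π a ∘L π b)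
    (hπiso : ∀ a : B', ‖π a‖ = ‖a‖)
    (hπnondeg : Dense ((Submodule.span ℂ {x : X | ∃ (a : B') (y : X), x = π a y}) : Set X)) :
    -- every `b ∈ LM_X(A)` induces a unique bounded map `L_b = Φ` on `A`, which is a left
    -- centralizer of the same norm
    (∀ b : X →L[ℂ] X, (∀ a : B', ∃ c : B', b ∘L π a = π c) →
      ∃! Φ : B' →L[ℂ] B', ∀ a : B', π (Φ a) = b ∘L π a) ∧
    (∀ (b : X →L[ℂ] X) (Φ : B' →L[ℂ] B'), (∀ a : B', π (Φ a) = b ∘L π a) →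
      (∀ a c : B', Φ (a * c) = Φ a * c) ∧ ‖Φ‖ = ‖b‖) ∧
    -- surjectivity: every bounded left centralizer arises from a unique left multiplier
    (∀ Φ : B' →L[ℂ] B', (∀ a c : B', Φ (a * c) = Φ a * c) →
      ∃! b : X →L[ℂ] X, (∀ a : B', ∃ c : B', b ∘L π a = π c) ∧
        ∀ a : B', π (Φ a) = b ∘L π a) := by
  have hπ : ∀ a : B', ‖π a‖ ≤ ‖a‖ := fun a ↦ (hπiso a).le
  have hπinj : Function.Injective π := (⟨π, hπiso⟩ : B' →ₗᵢ[ℂ] (X →L[ℂ] X)).injective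
  refine ⟨fun b hb ↦ existsUnique_comp_eq hπiso hb, fun b Φ hbΦ ↦ ?_, fun Φ hΦ ↦ ?_⟩
  · have hΦ := apply_mul_of_comp_eq hπmul hπinj hbΦ
    refine ⟨hΦ, le_antisymm (norm_le_of_comp_eq hπiso hbΦ) ?_⟩
    rw [eq_leftMultiplier hπmul hπ hπnondeg hΦ hbΦ]
    exact norm_leftMultiplier_le hπmul hπ hπnondeg hΦ
  · have hcomp := leftMultiplier_comp hπmul hπ hπnondeg hΦ
    exact ⟨leftMultiplier π Φ, ⟨fun a ↦ ⟨Φ a, (hcomp a).symm⟩, hcomp⟩,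
      fun b hb ↦ eq_leftMultiplier hπmul hπ hπnondeg hΦ hb.2⟩
end
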